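/- For all x in (0,1), arcsin(x) < (π(2-√2)/(π-2√2))·(sqrt(1+x) - sqrt(1-x)) / (√2(4-π)/(π-2√2) + sqrt(1+x) + sqrt(1-x)) < (π/(π-2))·x / (2/(π-2) + sqrt(1-x^2)). -/

import Mathlib

/-!
Put `x = sin 2t` with `0 < t < π/4`. Then `√(1 ± x) = cos t ± sin t` and `√(1 - x²) = cos 2t`,
so the improved bound is `2C sin t / (A + 2 cos t)`, where `C = A + 2`. The left inequality becomes
`f t > 0` for `f t = (A + 2) sin t - t (A + 2 cos t)`. Now `f` vanishes at `0` and at `π/4`, and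
`f' t = 2 sin (t/2) ψ t` with `ψ t = 2t cos (t/2) - A sin (t/2)`, which is strictly concave (as
`A < 8`) and vanishes at `0`. So `f'` changes sign at most once, from `+` to `-`, and `f > 0` on
`(0, π/4)`. The right inequality, in terms of `u = cos t`, says that a quadratic with roots
`√2/2` and `1` is positive between them.
-/

open Real Set

lemma StrictConcaveOn.pos_of_mem_Ioo {s : Set ℝ} {ψ : ℝ → ℝ}
    (hψ : StrictConcaveOn ℝ s ψ) {a y x : ℝ} (ha : a ∈ s) (hy : y ∈ s) (hψa : ψ a = 0)
    (hψy : 0 ≤ ψ y) (hx : x ∈ Ioo a y) : 0 < ψ x := by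
  have hay : a < y := hx.1.trans hx.2
  simpa [hψa, hψy] using
    hψ.lt_on_openSegment ha hy hay.ne (by rwa [openSegment_eq_Ioo hay])

lemma pos_of_hasDerivAt_eq_mul_of_strictConcaveOn {f w ψ : ℝ → ℝ} {a b : ℝ}
    (hf : ContinuousOn f (Icc a b)) (hf' : ∀ x ∈ Ioo a b, HasDerivAt f (w x * ψ x) x)
    (hw : ∀ x ∈ Ioo a b, 0 < w x) (hψ : StrictConcaveOn ℝ (Icc a b) ψ) (hψa : ψ a = 0)
    (hfa : f a = 0) (hfb : f b = 0) {x : ℝ} (hx : x ∈ Ioo a b) : 0 < f x := by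
  have ha : a ∈ Icc a b := left_mem_Icc.2 (hx.1.trans hx.2).le
  have hderiv {c d : ℝ} (hcd : Icc c d ⊆ Icc a b) :
      ∀ y ∈ interior (Icc c d), HasDerivWithinAt f (w y * ψ y) (interior (Icc c d)) y := by
    intro y hy
    have hy' : y ∈ Ioo a b := by simpa only [interior_Icc] using interior_mono hcd hy
    exact (hf' y hy').hasDerivWithinAt
  rcases le_or_gt 0 (ψ x) with hψx | hψx
  · have hmono : StrictMonoOn f (Icc a x) :=
      strictMonoOn_of_hasDerivWithinAt_pos (convex_Icc a x)
        (hf.mono (Icc_subset_Icc_right hx.2.le)) (hderiv (Icc_subset_Icc_right hx.2.le))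
        fun y hy => by
          rw [interior_Icc] at hy
          exact mul_pos (hw y ⟨hy.1, hy.2.trans hx.2⟩)
            (hψ.pos_of_mem_Ioo ha ⟨hx.1.le, hx.2.le⟩ hψa hψx hy)
    simpa [hfa] using hmono (left_mem_Icc.2 hx.1.le) (right_mem_Icc.2 hx.1.le) hx.1
  · have hanti : StrictAntiOn f (Icc x b) :=
      strictAntiOn_of_hasDerivWithinAt_neg (convex_Icc x b)
        (hf.mono (Icc_subset_Icc_left hx.1.le)) (hderiv (Icc_subset_Icc_left hx.1.le))
        fun y hy => by
          rw [interior_Icc] at hy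
          have hψy : ψ y < 0 := by
            by_contra! hψy
            exact hψx.not_ge (hψ.pos_of_mem_Ioo ha ⟨(hx.1.trans hy.1).le, hy.2.le⟩ hψa hψy
              ⟨hx.1, hy.1⟩).le
          exact mul_neg_of_pos_of_neg (hw y ⟨hx.1.trans hy.1, hy.2⟩) hψy
    simpa [hfb] using hanti (left_mem_Icc.2 hx.2.le) (right_mem_Icc.2 hx.2.le) hx.2

lemma hasDerivAt_mul_cos_half_sub_sin_half (a b s : ℝ) :
    HasDerivAt (fun s => b * s * cos (s / 2) - a * sin (s / 2))
      ((b - a / 2) * cos (s / 2) - b / 2 * s * sin (s / 2)) s := by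
  have hhalf := (hasDerivAt_id' s).div_const 2
  exact ((((hasDerivAt_id' s).const_mul b).mul hhalf.cos).sub
    (hhalf.sin.const_mul a)).congr_deriv (by ring)

lemma hasDerivAt_cos_half_sub_mul_sin_half (a b s : ℝ) :
    HasDerivAt (fun s => (b - a / 2) * cos (s / 2) - b / 2 * s * sin (s / 2))
      ((a / 4 - b) * sin (s / 2) - b / 4 * s * cos (s / 2)) s := by
  have hhalf := (hasDerivAt_id' s).div_const 2
  exact ((hhalf.cos.const_mul (b - a / 2)).sub
    (((hasDerivAt_id' s).const_mul (b / 2)).mul hhalf.sin)).congr_deriv (by ring)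

lemma strictConcaveOn_mul_cos_half_sub_sin_half {a b : ℝ} (hb : 0 ≤ b) (hab : a < 4 * b) :
    StrictConcaveOn ℝ (Icc 0 π) (fun s => b * s * cos (s / 2) - a * sin (s / 2)) := by
  refine strictConcaveOn_of_deriv2_neg (convex_Icc 0 π) (by fun_prop) fun s hs => ?_
  rw [interior_Icc] at hs
  have hderiv : deriv (fun s => b * s * cos (s / 2) - a * sin (s / 2)) =
      fun s => (b - a / 2) * cos (s / 2) - b / 2 * s * sin (s / 2) :=
    funext fun s => (hasDerivAt_mul_cos_half_sub_sin_half a b s).deriv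
  have hsin : 0 < sin (s / 2) :=
    sin_pos_of_pos_of_lt_pi (by linarith [hs.1]) (by linarith [hs.2, pi_pos])
  have hcos : 0 ≤ cos (s / 2) :=
    cos_nonneg_of_mem_Icc ⟨by linarith [hs.1, pi_pos], by linarith [hs.2]⟩
  rw [Function.iterate_succ_apply, Function.iterate_one, hderiv,
    (hasDerivAt_cos_half_sub_mul_sin_half a b s).deriv]
  nlinarith [mul_nonneg (mul_nonneg hb hs.1.le) hcos]

lemma hasDerivAt_add_mul_sin_sub_mul (a b s : ℝ) :
    HasDerivAt (fun s => (a + b) * sin s - s * (a + b * cos s))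
      (2 * sin (s / 2) * (b * s * cos (s / 2) - a * sin (s / 2))) s := by
  refine (((hasDerivAt_sin s).const_mul (a + b)).sub
    ((hasDerivAt_id' s).mul (((hasDerivAt_cos s).const_mul b).const_add a))).congr_deriv ?_
  have hsin : sin s = 2 * sin (s / 2) * cos (s / 2) := by
    rw [← sin_two_mul, mul_div_cancel₀ s two_ne_zero]
  have hcos : cos s = 1 - 2 * sin (s / 2) ^ 2 := by
    rw [← cos_two_mul_eq_one_sub, mul_div_cancel₀ s two_ne_zero]
  rw [hsin, hcos]
  ring

theorem mul_add_mul_cos_lt_add_mul_sin {a b T t : ℝ} (hb : 0 ≤ b) (hab : a < 4 * b)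
    (hT : T ≤ π) (hT_eq : T * (a + b * cos T) = (a + b) * sin T) (ht : t ∈ Ioo 0 T) :
    t * (a + b * cos t) < (a + b) * sin t := by
  refine sub_pos.1 (pos_of_hasDerivAt_eq_mul_of_strictConcaveOn
    (f := fun s => (a + b) * sin s - s * (a + b * cos s)) (by fun_prop)
    (fun s _ => hasDerivAt_add_mul_sin_sub_mul a b s) (fun s hs => ?_)
    ((strictConcaveOn_mul_cos_half_sub_sin_half hb hab).subset (Icc_subset_Icc_right hT)
      (convex_Icc 0 T))
    (by simp) (by simp) (by simp [hT_eq]) ht)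
  exact mul_pos two_pos (sin_pos_of_pos_of_lt_pi (half_pos hs.1) (by linarith [hs.2, pi_pos]))

lemma sqrt_two_lt : √2 < 1.415 := by
  rw [sqrt_lt' (by norm_num)]; norm_num

lemma lt_sqrt_two : 1.414 < √2 := by
  rw [lt_sqrt (by norm_num)]; norm_num

lemma sqrt_two_div_two_lt_cos {t : ℝ} (h₀ : 0 ≤ t) (h : t < π / 4) : √2 / 2 < cos t := by
  rw [← cos_pi_div_four]
  exact cos_lt_cos_of_nonneg_of_le_pi h₀ (by linarith [pi_pos]) h

lemma sin_lt_sqrt_two_div_two {t : ℝ} (h₀ : -(π / 2) ≤ t) (h : t < π / 4) :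
    sin t < √2 / 2 := by
  rw [← sin_pi_div_four]
  exact sin_lt_sin_of_lt_of_le_pi_div_two h₀ (by linarith [pi_pos]) h

lemma sqrt_one_add_sin_two_mul {t : ℝ} (h : 0 ≤ cos t + sin t) :
    √(1 + sin (2 * t)) = cos t + sin t := by
  rw [← sqrt_sq h, sin_two_mul]
  congr 1
  linear_combination -sin_sq_add_cos_sq t

lemma sqrt_one_sub_sin_two_mul {t : ℝ} (h : sin t ≤ cos t) :
    √(1 - sin (2 * t)) = cos t - sin t := by
  rw [← sqrt_sq (sub_nonneg.2 h), sin_two_mul]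
  congr 1
  linear_combination -sin_sq_add_cos_sq t

namespace Malesevic

noncomputable def coeffA : ℝ := √2 * (4 - π) / (π - 2 * √2)

noncomputable def coeffC : ℝ := π * (2 - √2) / (π - 2 * √2)

noncomputable def improvedBound (x : ℝ) : ℝ :=
  coeffC * (√(1 + x) - √(1 - x)) / (coeffA + √(1 + x) + √(1 - x))

noncomputable def earlierBound (x : ℝ) : ℝ :=
  π / (π - 2) * x / (2 / (π - 2) + √(1 - x ^ 2))

lemma two_mul_sqrt_two_lt_pi : 2 * √2 < π := by
  linarith [sqrt_two_lt, pi_gt_three]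

lemma coeffA_pos : 0 < coeffA :=
  div_pos (mul_pos (by positivity) (by linarith [pi_lt_four]))
    (by linarith [two_mul_sqrt_two_lt_pi])

lemma coeffA_lt_eight : coeffA < 8 := by
  rw [coeffA, div_lt_iff₀ (by linarith [two_mul_sqrt_two_lt_pi])]
  nlinarith [sqrt_two_lt, lt_sqrt_two, pi_gt_d2]

lemma coeffC_eq : coeffC = coeffA + 2 := by
  have : π - 2 * √2 ≠ 0 := (sub_pos.2 two_mul_sqrt_two_lt_pi).ne'
  rw [coeffC, coeffA]
  field_simp
  ring

lemma pi_div_four_mul_coeffA_add :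
    π / 4 * (coeffA + 2 * cos (π / 4)) = (coeffA + 2) * sin (π / 4) := by
  have : π - √2 * 2 ≠ 0 := by linarith [two_mul_sqrt_two_lt_pi]
  rw [cos_pi_div_four, sin_pi_div_four, coeffA]
  field_simp
  ring

lemma mul_coeffA_add_two_mul_cos_lt {t : ℝ} (ht : t ∈ Ioo 0 (π / 4)) :
    t * (coeffA + 2 * cos t) < coeffC * sin t := by
  rw [coeffC_eq]
  exact mul_add_mul_cos_lt_add_mul_sin zero_le_two (by linarith [coeffA_lt_eight])
    (by linarith [pi_pos]) pi_div_four_mul_coeffA_add ht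

lemma coeffC_mul_lt {u : ℝ} (hu : u ∈ Ioo (√2 / 2) 1) :
    coeffC * (2 + (π - 2) * (2 * u ^ 2 - 1)) < π * u * (coeffA + 2 * u) := by
  have hK := sub_pos.2 two_mul_sqrt_two_lt_pi
  have : π - 2 * √2 ≠ 0 := hK.ne'
  have key : (π - 2 * √2) *
        (π * u * (coeffA + 2 * u) - coeffC * (2 + (π - 2) * (2 * u ^ 2 - 1)))
      = 2 * π * (4 - π) * (√2 - 1) * (u - √2 / 2) * (1 - u) := by
    rw [coeffA, coeffC]
    field_simp
    linear_combination ((4 - π) * (1 - u)) * sq_sqrt (zero_le_two : (0 : ℝ) ≤ 2)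
  have hpos : 0 < 2 * π * (4 - π) * (√2 - 1) * (u - √2 / 2) * (1 - u) := by
    have := sub_pos.2 pi_lt_four
    have : 0 < √2 - 1 := by linarith [lt_sqrt_two]
    have := sub_pos.2 hu.1
    have := sub_pos.2 hu.2
    positivity
  rw [← key] at hpos
  linarith [pos_of_mul_pos_right hpos hK.le]

lemma improvedBound_sin_two_mul {t : ℝ} (ht : t ∈ Ioo 0 (π / 4)) :
    improvedBound (sin (2 * t)) = 2 * coeffC * sin t / (coeffA + 2 * cos t) := by
  have hcos := sqrt_two_div_two_lt_cos ht.1.le ht.2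
  have hsin := sin_lt_sqrt_two_div_two (by linarith [ht.1, pi_pos]) ht.2
  have hsin₀ := sin_pos_of_pos_of_lt_pi ht.1 (by linarith [ht.2, pi_pos])
  rw [improvedBound, sqrt_one_add_sin_two_mul (by linarith),
    sqrt_one_sub_sin_two_mul (by linarith)]
  ring

lemma earlierBound_sin_two_mul {t : ℝ} (ht : t ∈ Ioo 0 (π / 4)) :
    earlierBound (sin (2 * t)) =
      π / (π - 2) * sin (2 * t) / (2 / (π - 2) + cos (2 * t)) := by
  rw [earlierBound, ← cos_eq_sqrt_one_sub_sin_sq (by linarith [ht.1, pi_pos])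
    (by linarith [ht.2])]

lemma two_mul_lt_improvedBound_sin_two_mul {t : ℝ} (ht : t ∈ Ioo 0 (π / 4)) :
    2 * t < improvedBound (sin (2 * t)) := by
  have hcos₀ : 0 < cos t :=
    cos_pos_of_mem_Ioo ⟨by linarith [ht.1, pi_pos], by linarith [ht.2, pi_pos]⟩
  rw [improvedBound_sin_two_mul ht, lt_div_iff₀ (by linarith [coeffA_pos])]
  linarith [mul_coeffA_add_two_mul_cos_lt ht]

lemma improvedBound_lt_earlierBound_sin_two_mul {t : ℝ} (ht : t ∈ Ioo 0 (π / 4)) :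
    improvedBound (sin (2 * t)) < earlierBound (sin (2 * t)) := by
  have hcos := sqrt_two_div_two_lt_cos ht.1.le ht.2
  have hcos₁ : cos t < 1 := by
    simpa using cos_lt_cos_of_nonneg_of_le_pi le_rfl (by linarith [ht.2, pi_pos]) ht.1
  have hsin := sin_pos_of_pos_of_lt_pi ht.1 (by linarith [ht.2, pi_pos])
  have hpi : 0 < π - 2 := by linarith [pi_gt_three]
  have hquad := coeffC_mul_lt ⟨hcos, hcos₁⟩
  have hA := coeffA_pos
  have hcos₀ : 0 < cos t := lt_trans (by positivity) hcos
  have hcos_two : 0 < 2 * cos t ^ 2 - 1 := by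
    nlinarith [sq_sqrt (zero_le_two : (0 : ℝ) ≤ 2), sqrt_nonneg 2]
  have hden : 0 < 2 + (π - 2) * (2 * cos t ^ 2 - 1) := by positivity
  rw [improvedBound_sin_two_mul ht, earlierBound_sin_two_mul ht, sin_two_mul, cos_two_mul,
    show π / (π - 2) * (2 * sin t * cos t) / (2 / (π - 2) + (2 * cos t ^ 2 - 1))
      = π * (2 * sin t * cos t) / (2 + (π - 2) * (2 * cos t ^ 2 - 1)) by field_simp,
    div_lt_div_iff₀ (by linarith) hden]
  nlinarith [mul_lt_mul_of_pos_left hquad (mul_pos two_pos hsin)]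

end Malesevic

theorem stmt_18 : ∀ x ∈ Set.Ioo (0:ℝ) 1,
    Real.arcsin x <
      (Real.pi * (2 - Real.sqrt 2) / (Real.pi - 2 * Real.sqrt 2)) *
        (Real.sqrt (1 + x) - Real.sqrt (1 - x)) /
      (Real.sqrt 2 * (4 - Real.pi) / (Real.pi - 2 * Real.sqrt 2) +
        Real.sqrt (1 + x) + Real.sqrt (1 - x)) ∧
    (Real.pi * (2 - Real.sqrt 2) / (Real.pi - 2 * Real.sqrt 2)) *
        (Real.sqrt (1 + x) - Real.sqrt (1 - x)) /
      (Real.sqrt 2 * (4 - Real.pi) / (Real.pi - 2 * Real.sqrt 2) +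
        Real.sqrt (1 + x) + Real.sqrt (1 - x)) <
      (Real.pi / (Real.pi - 2)) * x / (2 / (Real.pi - 2) + Real.sqrt (1 - x ^ 2)) := by
  intro x ⟨hx₀, hx₁⟩
  obtain ⟨t, ht, rfl⟩ : ∃ t ∈ Ioo 0 (π / 4), x = sin (2 * t) :=
    ⟨arcsin x / 2,
      ⟨by linarith [arcsin_pos.2 hx₀], by linarith [arcsin_lt_pi_div_two.2 hx₁]⟩,
      by rw [mul_div_cancel₀ _ two_ne_zero, sin_arcsin (by linarith) hx₁.le]⟩
  change arcsin _ < Malesevic.improvedBound _ ∧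
    Malesevic.improvedBound _ < Malesevic.earlierBound _
  rw [arcsin_sin (by linarith [ht.1, pi_pos]) (by linarith [ht.2])]
  exact ⟨Malesevic.two_mul_lt_improvedBound_sin_two_mul ht,
    Malesevic.improvedBound_lt_earlierBound_sin_two_mul ht⟩
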